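/- For every positive integer n > 1, if δ(n) < 12·δ(2) = 12·(2 − 3·log₃ 2), then n is stable. -/
import Mathlib


/-- `CanWrite n k` means the positive integer `n` can be written using exactly `k` ones
combined by addition and multiplication. -/
inductive CanWrite : ℕ → ℕ → Prop
  | one : CanWrite 1 1
  | add {a b j k : ℕ} : CanWrite a j → CanWrite b k → CanWrite (a + b) (j + k)
  | mul {a b j k : ℕ} : CanWrite a j → CanWrite b k → CanWrite (a * b) (j + k)

/-- The integer complexity `‖n‖`: the least number of ones needed to write `n`. -/
noncomputable def cpx (n : ℕ) : ℕ := sInf {k | CanWrite n k}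

/-- The defect `δ(n) = ‖n‖ - 3 log₃ n`. -/
noncomputable def defect (n : ℕ) : ℝ := (cpx n : ℝ) - 3 * Real.logb 3 n

/-- `n` is stable if `‖3^k n‖ = 3k + ‖n‖` for all `k ≥ 0`. -/
def Stable (n : ℕ) : Prop := ∀ k : ℕ, cpx (3 ^ k * n) = 3 * k + cpx n

/-- The stabilization length `K(n)`: the least `k` such that `3^k n` is stable. -/
noncomputable def stabLen (n : ℕ) : ℕ := sInf {k | Stable (3 ^ k * n)}

/-- The stable complexity `‖n‖_st`: equal to `‖3^k n‖ - 3k` for any `k` with `3^k n` stable. -/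
noncomputable def stableCpx (n : ℕ) : ℕ :=
  sInf {m | ∃ k : ℕ, Stable (3 ^ k * n) ∧ cpx (3 ^ k * n) = m + 3 * k}

/-- The stable defect `δ_st(n) = ‖n‖_st - 3 log₃ n`. -/
noncomputable def stableDefect (n : ℕ) : ℝ := (stableCpx n : ℝ) - 3 * Real.logb 3 n

lemma cw_one_le {m c : ℕ} (h : CanWrite m c) : 1 ≤ m ∧ 1 ≤ c := by
  induction h with
  | one => omega
  | add _ _ ih1 ih2 => omega
  | mul _ _ ih1 ih2 => exact ⟨Nat.one_le_iff_ne_zero.2 (Nat.mul_ne_zero (by omega) (by omega)), by omega⟩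

lemma cw_self : ∀ n, 1 ≤ n → CanWrite n n := by
  intro n
  induction n with
  | zero => omega
  | succ m ih =>
    intro _
    rcases Nat.eq_zero_or_pos m with h | h
    · subst h; exact CanWrite.one
    · exact CanWrite.add (ih h) CanWrite.one

lemma cpx_can {n : ℕ} (h : 1 ≤ n) : CanWrite n (cpx n) :=
  Nat.sInf_mem ⟨n, cw_self n h⟩

lemma cpx_le {n c : ℕ} (h : CanWrite n c) : cpx n ≤ c := Nat.sInf_le h

lemma cw2 : CanWrite 2 2 := CanWrite.add CanWrite.one CanWrite.one
lemma cw3 : CanWrite 3 3 := CanWrite.add cw2 CanWrite.one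
lemma cw4 : CanWrite 4 4 := CanWrite.add cw3 CanWrite.one

lemma cw_mul3 {m c : ℕ} (h : CanWrite m c) : CanWrite (3 * m) (3 + c) := CanWrite.mul cw3 h

lemma ub2 (x : ℕ) : CanWrite (2 * 3 ^ x) (3 * x + 2) := by
  induction x with
  | zero => simpa using cw2
  | succ y ih =>
    have h1 : 2 * 3 ^ (y + 1) = 3 * (2 * 3 ^ y) := by ring
    have h2 : 3 * (y + 1) + 2 = 3 + (3 * y + 2) := by ring
    rw [h1, h2]; exact cw_mul3 ih

lemma ub4 (x : ℕ) : CanWrite (4 * 3 ^ x) (3 * x + 4) := by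
  induction x with
  | zero => simpa using cw4
  | succ y ih =>
    have h1 : 4 * 3 ^ (y + 1) = 3 * (4 * 3 ^ y) := by ring
    have h2 : 3 * (y + 1) + 4 = 3 + (3 * y + 4) := by ring
    rw [h1, h2]; exact cw_mul3 ih

lemma ub1 (x : ℕ) (hx : 1 ≤ x) : CanWrite (3 ^ x) (3 * x) := by
  induction x with
  | zero => omega
  | succ y ih =>
    rcases Nat.eq_or_lt_of_le hx with h | h
    · simpa [← h] using cw3
    · have h1 : 3 ^ (y + 1) = 3 * 3 ^ y := by ring
      have h2 : 3 * (y + 1) = 3 + 3 * y := by ring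
      rw [h1, h2]; exact cw_mul3 (ih (by omega))

lemma odd_pow3 (x : ℕ) : 3 ^ x % 2 = 1 := by
  induction x with
  | zero => rfl
  | succ y ih => rw [pow_succ]; omega

section helpers

lemma three_one_lt : (1:ℝ) < 3 := by norm_num

lemma logb_bound {p q : ℝ} {u v : ℕ} (hp : 0 < p) (h : p ^ u ≤ q ^ v) :
    (u:ℝ) * Real.logb 3 p ≤ (v:ℝ) * Real.logb 3 q := by
  have := Real.logb_le_logb_of_le three_one_lt (by positivity : (0:ℝ) < p ^ u) h
  rwa [Real.logb_pow, Real.logb_pow] at this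

lemma logb32_ge : (17:ℝ)/27 ≤ Real.logb 3 2 := by
  have h : ((3:ℝ) ^ (17:ℕ)) ≤ (2:ℝ) ^ (27:ℕ) := by norm_num
  have := logb_bound (by norm_num) h
  rw [Real.logb_self_eq_one three_one_lt] at this
  push_cast at this; linarith

lemma logb32_le : Real.logb 3 2 ≤ (19:ℝ)/30 := by
  have h : ((2:ℝ) ^ (30:ℕ)) ≤ (3:ℝ) ^ (19:ℕ) := by norm_num
  have := logb_bound (by norm_num) h
  rw [Real.logb_self_eq_one three_one_lt] at this
  push_cast at this; linarith

lemma logb54_le : Real.logb 3 ((5:ℝ)/4) ≤ (5:ℝ)/24 := by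
  have h : (((5:ℝ)/4) ^ (24:ℕ)) ≤ (3:ℝ) ^ (5:ℕ) := by norm_num
  have := logb_bound (by norm_num) h
  rw [Real.logb_self_eq_one three_one_lt] at this
  push_cast at this; linarith

lemma logb53_le : Real.logb 3 ((5:ℝ)/3) ≤ (1:ℝ)/2 := by
  have h : (((5:ℝ)/3) ^ (2:ℕ)) ≤ (3:ℝ) ^ (1:ℕ) := by norm_num
  have := logb_bound (by norm_num) h
  rw [Real.logb_self_eq_one three_one_lt] at this
  push_cast at this; linarith

lemma logb3_pow (x : ℕ) : Real.logb 3 (((3:ℕ)^x : ℕ) : ℝ) = x := by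
  push_cast
  rw [Real.logb_pow, Real.logb_self_eq_one three_one_lt, mul_one]

lemma logb3_2pow (x : ℕ) : Real.logb 3 ((2*3^x : ℕ) : ℝ) = Real.logb 3 2 + x := by
  push_cast
  rw [Real.logb_mul (by norm_num) (by positivity), Real.logb_pow,
    Real.logb_self_eq_one three_one_lt, mul_one]

lemma logb3_4pow (x : ℕ) : Real.logb 3 ((4*3^x : ℕ) : ℝ) = 2*Real.logb 3 2 + x := by
  push_cast
  rw [Real.logb_mul (by norm_num) (by positivity), Real.logb_pow,
    Real.logb_self_eq_one three_one_lt, mul_one,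
    show (4:ℝ) = 2^(2:ℕ) by norm_num, Real.logb_pow]
  push_cast; ring

lemma logb3_8pow (x : ℕ) : Real.logb 3 ((8*3^x : ℕ) : ℝ) = 3*Real.logb 3 2 + x := by
  push_cast
  rw [Real.logb_mul (by norm_num) (by positivity), Real.logb_pow,
    Real.logb_self_eq_one three_one_lt, mul_one,
    show (8:ℝ) = 2^(3:ℕ) by norm_num, Real.logb_pow]
  push_cast; ring

lemma logb3_16pow (x : ℕ) : Real.logb 3 ((16*3^x : ℕ) : ℝ) = 4*Real.logb 3 2 + x := by
  push_cast
  rw [Real.logb_mul (by norm_num) (by positivity), Real.logb_pow,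
    Real.logb_self_eq_one three_one_lt, mul_one,
    show (16:ℝ) = 2^(4:ℕ) by norm_num, Real.logb_pow]
  push_cast; ring

lemma logb3_natmul (a b : ℕ) (ha : 1 ≤ a) (hb : 1 ≤ b) :
    Real.logb 3 ((a*b : ℕ) : ℝ) = Real.logb 3 (a:ℝ) + Real.logb 3 (b:ℝ) := by
  push_cast
  exact Real.logb_mul (by exact_mod_cast (by omega : a ≠ 0))
    (by exact_mod_cast (by omega : b ≠ 0))

end helpers

def KeyP (m c : ℕ) : Prop :=
  (∃ a, m = 3^a ∧ 3*a ≤ c) ∨ (∃ a, m = 2*3^a ∧ 3*a+2 ≤ c) ∨ (∃ a, m = 4*3^a ∧ 3*a+4 ≤ c) ∨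
    3*Real.logb 3 (m:ℝ) + (23 - 36*Real.logb 3 2) ≤ (c:ℝ)

lemma keyP_real {m c : ℕ} (h : KeyP m c) : 3 * Real.logb 3 (m:ℝ) ≤ (c:ℝ) := by
  rcases h with ⟨a,rfl,hc⟩|⟨a,rfl,hc⟩|⟨a,rfl,hc⟩|h4
  · rw [logb3_pow]
    exact_mod_cast Nat.cast_le.2 hc
  · rw [logb3_2pow]
    have hc' : ((3*a+2 : ℕ):ℝ) ≤ c := Nat.cast_le.2 hc
    push_cast at hc'
    have := logb32_le; linarith
  · rw [logb3_4pow]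
    have hc' : ((3*a+4 : ℕ):ℝ) ≤ c := Nat.cast_le.2 hc
    push_cast at hc'
    have := logb32_le; linarith
  · have := logb32_le; linarith

lemma two_le_of {c : ℕ} (h : KeyP 2 c) : 2 ≤ c := by
  rcases h with ⟨a,he,hc⟩|⟨a,he,hc⟩|⟨a,he,hc⟩|h4
  · have := odd_pow3 a; omega
  · omega
  · have : 0 < 3^a := pow_pos (by norm_num) a; omega
  · have h2 : ((2:ℕ):ℝ) = (2:ℝ) := by norm_num
    rw [h2] at h4
    have : (2:ℝ) ≤ (c:ℝ) := by have := logb32_le; have := logb32_ge; linarith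
    exact_mod_cast this

lemma three_le_of {c : ℕ} (h : KeyP 3 c) : 3 ≤ c := by
  rcases h with ⟨a,he,hc⟩|⟨a,he,hc⟩|⟨a,he,hc⟩|h4
  · rcases Nat.eq_zero_or_pos a with h0|h0
    · subst h0; norm_num at he
    · omega
  · have := odd_pow3 a
    have h2 : 0 < 3^a := pow_pos (by norm_num) a
    omega
  · have h2 : 0 < 3^a := pow_pos (by norm_num) a; omega
  · have h3 : ((3:ℕ):ℝ) = (3:ℝ) := by norm_num
    rw [h3, Real.logb_self_eq_one three_one_lt] at h4
    have : (3:ℝ) ≤ (c:ℝ) := by have := logb32_le; linarith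
    exact_mod_cast this

lemma addAux {a b j k : ℕ} (hab : a ≤ b) (ha : 1 ≤ a) (hj : 1 ≤ j) (hk : 1 ≤ k)
    (Pa : KeyP a j) (Pb : KeyP b k) : KeyP (a+b) (j+k) := by
  have hb1 : 1 ≤ b := le_trans ha hab
  rcases Nat.lt_or_ge a 3 with ha3 | ha3
  · interval_cases a
    · -- a = 1
      rcases Nat.lt_or_ge b 4 with hb4 | hb4
      · interval_cases b
        · exact Or.inr (Or.inl ⟨0, by norm_num, by omega⟩)
        · have := two_le_of Pb
          exact Or.inl ⟨1, by norm_num, by omega⟩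
        · have := three_le_of Pb
          exact Or.inr (Or.inr (Or.inl ⟨0, by norm_num, by omega⟩))
      · -- b ≥ 4
        right; right; right
        have hbR : (4:ℝ) ≤ (b:ℝ) := by exact_mod_cast hb4
        have hRb : 3*Real.logb 3 (b:ℝ) ≤ (k:ℝ) := keyP_real Pb
        have hjR : (1:ℝ) ≤ (j:ℝ) := by exact_mod_cast hj
        have hmono : Real.logb 3 ((1:ℝ) + b) ≤ Real.logb 3 ((b:ℝ) * (5/4)) :=
          Real.logb_le_logb_of_le three_one_lt (by linarith) (by linarith)
        rw [Real.logb_mul (by linarith) (by norm_num)] at hmono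
        have h54 := logb54_le
        have hL := logb32_ge
        push_cast
        linarith
    · -- a = 2
      have hj2 : 2 ≤ j := two_le_of Pa
      have hjR : (2:ℝ) ≤ (j:ℝ) := by exact_mod_cast hj2
      rcases Nat.lt_or_ge b 3 with hb3 | hb3
      · interval_cases b
        · have := two_le_of Pb
          exact Or.inr (Or.inr (Or.inl ⟨0, by norm_num, by omega⟩))
      · -- b ≥ 3
        right; right; right
        have hbR : (3:ℝ) ≤ (b:ℝ) := by exact_mod_cast hb3
        have hRb : 3*Real.logb 3 (b:ℝ) ≤ (k:ℝ) := keyP_real Pb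
        have hmono : Real.logb 3 ((2:ℝ) + b) ≤ Real.logb 3 ((b:ℝ) * (5/3)) :=
          Real.logb_le_logb_of_le three_one_lt (by linarith) (by linarith)
        rw [Real.logb_mul (by linarith) (by norm_num)] at hmono
        have h53 := logb53_le
        have hL := logb32_ge
        push_cast
        linarith
  · -- a, b ≥ 3
    right; right; right
    have haR : (3:ℝ) ≤ (a:ℝ) := by exact_mod_cast ha3
    have hbR : (3:ℝ) ≤ (b:ℝ) := by exact_mod_cast (le_trans ha3 hab)
    have hRa : 3*Real.logb 3 (a:ℝ) ≤ (j:ℝ) := keyP_real Pa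
    have hRb : 3*Real.logb 3 (b:ℝ) ≤ (k:ℝ) := keyP_real Pb
    have hineq : ((a:ℝ) + b) ≤ (2/3) * ((a:ℝ) * b) := by
      nlinarith [mul_nonneg (by linarith : (0:ℝ) ≤ (a:ℝ)) (by linarith : (0:ℝ) ≤ (b:ℝ) - 3),
        mul_nonneg (by linarith : (0:ℝ) ≤ (a:ℝ) - 3) (by linarith : (0:ℝ) ≤ (b:ℝ))]
    have hmono : Real.logb 3 ((a:ℝ) + b) ≤ Real.logb 3 ((2/3) * ((a:ℝ) * b)) :=
      Real.logb_le_logb_of_le three_one_lt (by linarith) hineq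
    rw [Real.logb_mul (by norm_num) (by positivity), Real.logb_mul (by positivity) (by positivity),
      Real.logb_div (by norm_num) (by norm_num), Real.logb_self_eq_one three_one_lt] at hmono
    have hL := logb32_ge
    push_cast
    linarith

lemma mulAux {a b j k : ℕ} (ha : 1 ≤ a) (hb : 1 ≤ b) (Pa : KeyP a j) (Pb : KeyP b k) :
    KeyP (a * b) (j + k) := by
  have hL := logb32_ge
  have hL' := logb32_le
  rcases Pa with ⟨x,rfl,hx⟩|⟨x,rfl,hx⟩|⟨x,rfl,hx⟩|h4a
  · rcases Pb with ⟨y,rfl,hy⟩|⟨y,rfl,hy⟩|⟨y,rfl,hy⟩|h4b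
    · exact Or.inl ⟨x+y, by rw [pow_add], by omega⟩
    · exact Or.inr (Or.inl ⟨x+y, by rw [pow_add]; ring, by omega⟩)
    · exact Or.inr (Or.inr (Or.inl ⟨x+y, by rw [pow_add]; ring, by omega⟩))
    · right; right; right
      rw [logb3_natmul _ _ (Nat.one_le_iff_ne_zero.2 (by positivity)) hb, logb3_pow]
      have hx' : ((3*x : ℕ):ℝ) ≤ j := Nat.cast_le.2 hx
      push_cast at hx' ⊢
      linarith
  · rcases Pb with ⟨y,rfl,hy⟩|⟨y,rfl,hy⟩|⟨y,rfl,hy⟩|h4b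
    · exact Or.inr (Or.inl ⟨x+y, by rw [pow_add]; ring, by omega⟩)
    · exact Or.inr (Or.inr (Or.inl ⟨x+y, by rw [pow_add]; ring, by omega⟩))
    · right; right; right
      have hm : (2*3^x) * (4*3^y) = 8*3^(x+y) := by rw [pow_add]; ring
      rw [hm, logb3_8pow]
      have hx' : ((3*x+2 : ℕ):ℝ) ≤ j := Nat.cast_le.2 hx
      have hy' : ((3*y+4 : ℕ):ℝ) ≤ k := Nat.cast_le.2 hy
      push_cast at hx' hy' ⊢
      linarith
    · right; right; right
      rw [logb3_natmul _ _ (Nat.one_le_iff_ne_zero.2 (by positivity)) hb, logb3_2pow]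
      have hx' : ((3*x+2 : ℕ):ℝ) ≤ j := Nat.cast_le.2 hx
      push_cast at hx' ⊢
      linarith
  · rcases Pb with ⟨y,rfl,hy⟩|⟨y,rfl,hy⟩|⟨y,rfl,hy⟩|h4b
    · exact Or.inr (Or.inr (Or.inl ⟨x+y, by rw [pow_add]; ring, by omega⟩))
    · right; right; right
      have hm : (4*3^x) * (2*3^y) = 8*3^(x+y) := by rw [pow_add]; ring
      rw [hm, logb3_8pow]
      have hx' : ((3*x+4 : ℕ):ℝ) ≤ j := Nat.cast_le.2 hx
      have hy' : ((3*y+2 : ℕ):ℝ) ≤ k := Nat.cast_le.2 hy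
      push_cast at hx' hy' ⊢
      linarith
    · right; right; right
      have hm : (4*3^x) * (4*3^y) = 16*3^(x+y) := by rw [pow_add]; ring
      rw [hm, logb3_16pow]
      have hx' : ((3*x+4 : ℕ):ℝ) ≤ j := Nat.cast_le.2 hx
      have hy' : ((3*y+4 : ℕ):ℝ) ≤ k := Nat.cast_le.2 hy
      push_cast at hx' hy' ⊢
      linarith
    · right; right; right
      rw [logb3_natmul _ _ (Nat.one_le_iff_ne_zero.2 (by positivity)) hb, logb3_4pow]
      have hx' : ((3*x+4 : ℕ):ℝ) ≤ j := Nat.cast_le.2 hx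
      push_cast at hx' ⊢
      linarith
  · rcases Pb with ⟨y,rfl,hy⟩|⟨y,rfl,hy⟩|⟨y,rfl,hy⟩|h4b
    · right; right; right
      rw [logb3_natmul _ _ ha (Nat.one_le_iff_ne_zero.2 (by positivity)), logb3_pow]
      have hy' : ((3*y : ℕ):ℝ) ≤ k := Nat.cast_le.2 hy
      push_cast at hy' ⊢
      linarith
    · right; right; right
      rw [logb3_natmul _ _ ha (Nat.one_le_iff_ne_zero.2 (by positivity)), logb3_2pow]
      have hy' : ((3*y+2 : ℕ):ℝ) ≤ k := Nat.cast_le.2 hy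
      push_cast at hy' ⊢
      linarith
    · right; right; right
      rw [logb3_natmul _ _ ha (Nat.one_le_iff_ne_zero.2 (by positivity)), logb3_4pow]
      have hy' : ((3*y+4 : ℕ):ℝ) ≤ k := Nat.cast_le.2 hy
      push_cast at hy' ⊢
      linarith
    · right; right; right
      rw [logb3_natmul _ _ ha hb]
      push_cast
      linarith

lemma keyLemma : ∀ {m c : ℕ}, CanWrite m c → KeyP m c := by
  intro m c h
  induction h with
  | one => exact Or.inl ⟨0, by norm_num, by omega⟩
  | @add a b j k ha hb iha ihb =>
    obtain ⟨hA, hJ⟩ := cw_one_le ha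
    obtain ⟨hB, hK⟩ := cw_one_le hb
    rcases le_total a b with h | h
    · exact addAux h hA hJ hK iha ihb
    · have := addAux h hB hK hJ ihb iha
      rwa [Nat.add_comm b a, Nat.add_comm k j] at this
  | @mul a b j k ha hb iha ihb =>
    obtain ⟨hA, _⟩ := cw_one_le ha
    obtain ⟨hB, _⟩ := cw_one_le hb
    exact mulAux hA hB iha ihb

lemma fam1 {x c : ℕ} (h : KeyP (3^x) c) : 3*x ≤ c := by
  rcases h with ⟨a,he,hc⟩|⟨a,he,hc⟩|⟨a,he,hc⟩|h4
  · have := Nat.pow_right_injective (by norm_num : 2 ≤ 3) he; omega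
  · have h1 := odd_pow3 x
    rw [he, Nat.mul_mod_right] at h1; omega
  · have h1 := odd_pow3 x
    have h2 : 4*3^a = 2*(2*3^a) := by ring
    rw [he, h2, Nat.mul_mod_right] at h1; omega
  · rw [logb3_pow] at h4
    have hL' := logb32_le
    have : ((3*x : ℕ):ℝ) ≤ c := by push_cast; linarith
    exact_mod_cast this

lemma fam2 {x c : ℕ} (h : KeyP (2*3^x) c) : 3*x + 2 ≤ c := by
  rcases h with ⟨a,he,hc⟩|⟨a,he,hc⟩|⟨a,he,hc⟩|h4
  · have h1 := odd_pow3 a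
    rw [← he, Nat.mul_mod_right] at h1; omega
  · have : (3:ℕ)^x = 3^a := by omega
    have := Nat.pow_right_injective (by norm_num : 2 ≤ 3) this; omega
  · have h1 := odd_pow3 x
    have h2 : (3:ℕ)^x = 2*3^a := by omega
    rw [h2, Nat.mul_mod_right] at h1; omega
  · rw [logb3_2pow] at h4
    have hL' := logb32_le
    have : ((3*x + 2 : ℕ):ℝ) ≤ c := by push_cast; linarith
    exact_mod_cast this

lemma fam3 {x c : ℕ} (h : KeyP (4*3^x) c) : 3*x + 4 ≤ c := by
  rcases h with ⟨a,he,hc⟩|⟨a,he,hc⟩|⟨a,he,hc⟩|h4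
  · have h1 := odd_pow3 a
    have h2 : 4*3^x = 2*(2*3^x) := by ring
    rw [← he, h2, Nat.mul_mod_right] at h1; omega
  · have h1 := odd_pow3 a
    have h2 : 2*3^a = 4*3^x → 3^a = 2*3^x := by omega
    rw [h2 he.symm, Nat.mul_mod_right] at h1; omega
  · have : (3:ℕ)^x = 3^a := by omega
    have := Nat.pow_right_injective (by norm_num : 2 ≤ 3) this; omega
  · rw [logb3_4pow] at h4
    have hL' := logb32_le
    have : ((3*x + 4 : ℕ):ℝ) ≤ c := by push_cast; linarith
    exact_mod_cast this

lemma cpx_two : cpx 2 = 2 :=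
  le_antisymm (cpx_le cw2) (two_le_of (keyLemma (cpx_can (by norm_num))))

lemma step_lemma {m : ℕ} (hm : 2 ≤ m)
    (hd : (cpx m : ℝ) - 3*Real.logb 3 (m:ℝ) < 24 - 36*Real.logb 3 2) :
    cpx (3*m) = 3 + cpx m := by
  have hub : cpx (3*m) ≤ 3 + cpx m := cpx_le (cw_mul3 (cpx_can (by omega)))
  have hlb : 3 + cpx m ≤ cpx (3*m) := by
    by_contra hcon
    push_neg at hcon
    have hle : cpx (3*m) ≤ 2 + cpx m := by omega
    have hK := keyLemma (cpx_can (show 1 ≤ 3*m by omega))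
    rcases hK with ⟨x,he,hc⟩|⟨x,he,hc⟩|⟨x,he,hc⟩|h4
    · -- 3m = 3^x
      have hx2 : 2 ≤ x := by
        rcases Nat.lt_or_ge x 2 with h2|h2
        · interval_cases x <;> norm_num at he <;> omega
        · exact h2
      obtain ⟨y, rfl⟩ : ∃ y, x = y + 1 := ⟨x-1, by omega⟩
      rw [pow_succ] at he
      have hm' : m = 3^y := by omega
      have hub' : cpx m ≤ 3*y := by rw [hm']; exact cpx_le (ub1 y (by omega))
      omega
    · -- 3m = 2*3^x
      have hx1 : 1 ≤ x := by
        rcases Nat.eq_zero_or_pos x with h0|h0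
        · subst h0; norm_num at he; omega
        · exact h0
      obtain ⟨y, rfl⟩ : ∃ y, x = y + 1 := ⟨x-1, by omega⟩
      rw [pow_succ] at he
      have hm' : m = 2*3^y := by omega
      have hub' : cpx m ≤ 3*y + 2 := by rw [hm']; exact cpx_le (ub2 y)
      omega
    · -- 3m = 4*3^x
      have hx1 : 1 ≤ x := by
        rcases Nat.eq_zero_or_pos x with h0|h0
        · subst h0; norm_num at he; omega
        · exact h0
      obtain ⟨y, rfl⟩ : ∃ y, x = y + 1 := ⟨x-1, by omega⟩
      rw [pow_succ] at he
      have hm' : m = 4*3^y := by omega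
      have hub' : cpx m ≤ 3*y + 4 := by rw [hm']; exact cpx_le (ub4 y)
      omega
    · -- real branch: defect drop contradiction
      have hl3 : Real.logb 3 ((3*m : ℕ):ℝ) = 1 + Real.logb 3 (m:ℝ) := by
        rw [logb3_natmul 3 m (by norm_num) (by omega),
          show ((3:ℕ):ℝ) = (3:ℝ) by norm_num, Real.logb_self_eq_one three_one_lt]
      rw [hl3] at h4
      have hcast : (cpx (3*m) : ℝ) ≤ 2 + cpx m := by exact_mod_cast hle
      linarith
  omega


theorem stable_of_defect_lt_twelve_defect_two :
    defect 2 = 2 - 3 * Real.logb 3 2 ∧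
    ∀ n : ℕ, 1 < n → defect n < 12 * defect 2 → Stable n := by
  have hd2 : defect 2 = 2 - 3 * Real.logb 3 2 := by
    unfold defect
    rw [cpx_two]; norm_num
  refine ⟨hd2, ?_⟩
  intro n hn hd k
  induction k with
  | zero => simp
  | succ k ih =>
    have hmul : 3^(k+1)*n = 3*(3^k*n) := by ring
    have hm2 : 2 ≤ 3^k*n := le_trans hn (Nat.le_mul_of_pos_left n (pow_pos (by norm_num) k))
    have hlogm : Real.logb 3 ((3^k*n : ℕ):ℝ) = k + Real.logb 3 (n:ℝ) := by
      rw [logb3_natmul (3^k) n (Nat.one_le_iff_ne_zero.2 (by positivity)) (by omega), logb3_pow]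
    have hdm : (cpx (3^k*n) : ℝ) - 3*Real.logb 3 ((3^k*n : ℕ):ℝ) < 24 - 36*Real.logb 3 2 := by
      rw [ih, hlogm]
      rw [hd2] at hd
      unfold defect at hd
      push_cast
      linarith
    rw [hmul, step_lemma hm2 hdm, ih]
    ring
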